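/- Let Z₁, ..., Z_k be independent geometric random variables each with success probability p ≥ 1/2 (counting trials up to and including the first success), and Z = Z₁ + ⋯ + Z_k. Then for any λ ≥ 1, Pr(Z ≥ 1.4·E[Z]) ≤ exp(-p·E[Z]·(1.4 - 1 - ln 1.4)). -/

import Mathlib

set_option maxHeartbeats 1000000

open MeasureTheory ProbabilityTheory in
/-- Janson's tail inequality, specialized: `Z = Z₁ + ⋯ + Z_k` a sum of independent
geometric random variables (trials up to and including the first success) with common
success probability `p ≥ 1/2`; then `E[Z] = k/p` and
`Pr(Z ≥ 1.4 E[Z]) ≤ exp(-p · E[Z] · (1.4 - 1 - ln 1.4))`. -/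
theorem stmt_4 {Ω : Type*} [MeasurableSpace Ω] (μ : Measure Ω) [IsProbabilityMeasure μ]
    (k : ℕ) (p : ℝ) (hp : 1 / 2 ≤ p) (hp1 : p ≤ 1)
    (Z : Fin k → Ω → ℕ) (hmeas : ∀ i, Measurable (Z i))
    (hindep : iIndepFun Z μ)
    (hgeom : ∀ i, ∀ t : ℕ, μ {ω | Z i ω = t + 1} = ENNReal.ofReal (p * (1 - p) ^ t)) :
    μ {ω | 1.4 * ((k : ℝ) / p) ≤ ∑ i, (Z i ω : ℝ)} ≤
      ENNReal.ofReal (Real.exp (-(p * ((k : ℝ) / p) * (1.4 - 1 - Real.log 1.4)))) := by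
  classical
  have hp0 : (0 : ℝ) < p := lt_of_lt_of_le (by norm_num) hp
  set t : ℝ := 2 * p / 7 with ht_def
  have ht0 : 0 ≤ t := by positivity
  have ht1 : t ≤ 2 / 7 := by rw [ht_def]; linarith
  -- (1 - t) * exp t ≤ 1
  have hexp1 : (1 - t) * Real.exp t ≤ 1 := by
    have h := Real.add_one_le_exp (-t)
    have h2 : (1 - t) * Real.exp t ≤ Real.exp (-t) * Real.exp t := by
      nlinarith [Real.exp_pos t]
    rw [← Real.exp_add] at h2
    simpa using h2
  have hexple : Real.exp t ≤ 7 / 5 := by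
    nlinarith [Real.exp_pos t]
  have hq1 : (1 - p) * Real.exp t < 1 := by
    nlinarith [Real.exp_pos t]
  have hD : 0 < 1 - (1 - p) * Real.exp t := by linarith
  -- the real-valued variables
  set X : Fin k → Ω → ℝ := fun i ω => (Z i ω : ℝ) with hX_def
  have hXmeas : ∀ i, Measurable (X i) := fun i =>
    Measurable.comp measurable_from_top (hmeas i)
  have hXindep : iIndepFun X μ :=
    hindep.comp (fun _ (n : ℕ) => (n : ℝ)) (fun _ => measurable_from_top)
  -- distribution facts
  set M : ℝ := p * Real.exp t / (1 - (1 - p) * Real.exp t) with hM_def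
  have hM0 : 0 ≤ M := by positivity
  have hL : ∀ i, ∫⁻ ω, ENNReal.ofReal (Real.exp (t * X i ω)) ∂μ = ENNReal.ofReal M := by
    intro i
    have hmap : ∀ n : ℕ, (μ.map (Z i)) {n} = μ {ω | Z i ω = n} := by
      intro n
      rw [Measure.map_apply (hmeas i) (measurableSet_singleton n)]
      rfl
    have hsucc : ∀ n : ℕ, (μ.map (Z i)) {n + 1} = ENNReal.ofReal (p * (1 - p) ^ n) := by
      intro n; rw [hmap, hgeom]
    -- total mass of the successor part is 1
    have hones : (1 - ENNReal.ofReal (1 - p)) = ENNReal.ofReal p := by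
      rw [← ENNReal.ofReal_one, ← ENNReal.ofReal_sub _ (by linarith : (0:ℝ) ≤ 1 - p)]
      norm_num
    have hsum1 : ∑' n : ℕ, (μ.map (Z i)) {n + 1} = 1 := by
      have : ∀ n : ℕ, (μ.map (Z i)) {n + 1}
          = ENNReal.ofReal p * (ENNReal.ofReal (1 - p)) ^ n := by
        intro n
        rw [hsucc, ENNReal.ofReal_mul hp0.le, ENNReal.ofReal_pow (by linarith)]
      rw [tsum_congr this, ENNReal.tsum_mul_left, ENNReal.tsum_geometric, hones,
        ENNReal.mul_inv_cancel (by simpa [ENNReal.ofReal_pos] using hp0)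
          ENNReal.ofReal_ne_top]
    have huniv : ∑' n : ℕ, (μ.map (Z i)) {n} = 1 := by
      have hmapmeas : IsProbabilityMeasure (μ.map (Z i)) :=
        Measure.isProbabilityMeasure_map (hmeas i).aemeasurable
      have hU : (⋃ n : ℕ, ({n} : Set ℕ)) = Set.univ := Set.iUnion_of_singleton ℕ
      rw [← measure_iUnion
        (fun m n hmn => by simp [Function.onFun, Set.disjoint_singleton, hmn])
        (fun n => measurableSet_singleton n), hU]
      exact measure_univ
    have hzero : (μ.map (Z i)) {0} = 0 := by
      have h0 := tsum_eq_zero_add' (f := fun n : ℕ => (μ.map (Z i)) {n})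
        ENNReal.summable
      rw [huniv, hsum1] at h0
      have h0' : (μ.map (Z i)) {(0:ℕ)} + 1 = 0 + 1 := by rw [zero_add, ← h0]
      exact WithTop.add_right_cancel ENNReal.one_ne_top h0'
    simp only [hX_def]
    calc ∫⁻ ω, ENNReal.ofReal (Real.exp (t * (Z i ω : ℝ))) ∂μ
        = ∫⁻ n, ENNReal.ofReal (Real.exp (t * (n : ℝ))) ∂(μ.map (Z i)) :=
          (lintegral_map (f := fun n : ℕ => ENNReal.ofReal (Real.exp (t * (n : ℝ))))
            measurable_from_top (hmeas i)).symm
      _ = ∑' n : ℕ, ENNReal.ofReal (Real.exp (t * n)) * (μ.map (Z i)) {n} := by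
          rw [lintegral_countable']
      _ = ENNReal.ofReal (Real.exp 0) * (μ.map (Z i)) {0}
          + ∑' n : ℕ, ENNReal.ofReal (Real.exp (t * (n + 1))) * (μ.map (Z i)) {n + 1} := by
          rw [tsum_eq_zero_add' ENNReal.summable]
          push_cast
          simp
      _ = ∑' n : ℕ, ENNReal.ofReal (p * Real.exp t)
            * (ENNReal.ofReal ((1 - p) * Real.exp t)) ^ n := by
          rw [hzero, mul_zero, zero_add]
          refine tsum_congr fun n => ?_
          rw [hsucc, ← ENNReal.ofReal_mul (Real.exp_nonneg _),
            ← ENNReal.ofReal_pow (by nlinarith [Real.exp_pos t] : (0:ℝ) ≤ (1 - p) * Real.exp t),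
            ← ENNReal.ofReal_mul (by positivity)]
          congr 1
          have hxp : Real.exp (t * ((n : ℝ) + 1)) = Real.exp t ^ n * Real.exp t := by
            rw [show t * ((n : ℝ) + 1) = (n : ℝ) * t + t by ring, Real.exp_add,
              ← Real.exp_nat_mul]
          rw [hxp, mul_pow]
          ring
      _ = ENNReal.ofReal (p * Real.exp t)
            * (1 - ENNReal.ofReal ((1 - p) * Real.exp t))⁻¹ := by
          rw [ENNReal.tsum_mul_left, ENNReal.tsum_geometric]
      _ = ENNReal.ofReal M := by
          rw [show (1 : ENNReal) - ENNReal.ofReal ((1 - p) * Real.exp t)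
              = ENNReal.ofReal (1 - (1 - p) * Real.exp t) by
            rw [← ENNReal.ofReal_one,
              ← ENNReal.ofReal_sub _ (by nlinarith [Real.exp_pos t])]]
          rw [← ENNReal.ofReal_inv_of_pos hD, ← ENNReal.ofReal_mul (by positivity), hM_def,
            div_eq_mul_inv]
  -- integrability of each exp(t * X i)
  have hint : ∀ i, Integrable (fun ω => Real.exp (t * X i ω)) μ := by
    intro i
    have hm : AEStronglyMeasurable (fun ω => Real.exp (t * X i ω)) μ :=
      (((hXmeas i).const_mul t).exp).aestronglyMeasurable
    refine ⟨hm, ?_⟩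
    rw [hasFiniteIntegral_iff_ofReal (Filter.Eventually.of_forall fun ω => Real.exp_nonneg _)]
    rw [hL i]
    exact ENNReal.ofReal_lt_top
  -- mgf value and bound
  have hmgf : ∀ i, mgf (X i) μ t ≤ 7 / 5 := by
    intro i
    have hval : mgf (X i) μ t = M := by
      rw [mgf, integral_eq_lintegral_of_nonneg_ae
        (Filter.Eventually.of_forall fun ω => Real.exp_nonneg _) (hint i).aestronglyMeasurable,
        hL i, ENNReal.toReal_ofReal hM0]
    rw [hval, hM_def, div_le_iff₀ hD]
    have h14 : 1.4 - 0.4 * p = 1.4 * (1 - t) := by rw [ht_def]; ring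
    nlinarith [Real.exp_pos t]
  -- Chernoff
  have hintsum : Integrable (fun ω => Real.exp (t * (∑ i, X i) ω)) μ :=
    hXindep.integrable_exp_mul_sum hXmeas (fun i _ => hint i)
  have hcher := measure_ge_le_exp_mul_mgf (μ := μ) (X := ∑ i, X i)
    (1.4 * ((k : ℝ) / p)) ht0 hintsum
  have hset : {ω | 1.4 * ((k : ℝ) / p) ≤ (∑ i, X i) ω}
      = {ω | 1.4 * ((k : ℝ) / p) ≤ ∑ i, (Z i ω : ℝ)} := by
    ext ω; simp [Finset.sum_apply, hX_def]
  rw [hset] at hcher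
  have hprod : mgf (∑ i, X i) μ t ≤ (7 / 5 : ℝ) ^ k := by
    rw [hXindep.mgf_sum hXmeas]
    calc ∏ i : Fin k, mgf (X i) μ t ≤ ∏ _i : Fin k, (7/5 : ℝ) :=
          Finset.prod_le_prod (fun i _ => mgf_nonneg) (fun i _ => hmgf i)
      _ = (7/5 : ℝ) ^ k := by simp [div_pow]
  have hfinal : Real.exp (-t * (1.4 * ((k : ℝ) / p))) * (7 / 5 : ℝ) ^ k
      = Real.exp (-(p * ((k : ℝ) / p) * (1.4 - 1 - Real.log 1.4))) := by
    have h1 : -t * (1.4 * ((k : ℝ) / p)) = -(0.4 * k) := by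
      rw [ht_def]; field_simp; ring
    have h2 : (7 / 5 : ℝ) ^ k = Real.exp ((k : ℝ) * Real.log 1.4) := by
      rw [Real.exp_nat_mul, Real.exp_log (by norm_num : (0:ℝ) < 1.4)]
      norm_num
    have h3 : p * ((k : ℝ) / p) = (k : ℝ) := by field_simp
    rw [h1, h2, ← Real.exp_add, h3]
    congr 1
    ring
  calc μ {ω | 1.4 * ((k : ℝ) / p) ≤ ∑ i, (Z i ω : ℝ)}
      = ENNReal.ofReal (μ {ω | 1.4 * ((k : ℝ) / p) ≤ ∑ i, (Z i ω : ℝ)}).toReal :=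
        (ENNReal.ofReal_toReal (measure_ne_top _ _)).symm
    _ ≤ ENNReal.ofReal (Real.exp (-(p * ((k : ℝ) / p) * (1.4 - 1 - Real.log 1.4)))) := by
        refine ENNReal.ofReal_le_ofReal ?_
        calc (μ {ω | 1.4 * ((k : ℝ) / p) ≤ ∑ i, (Z i ω : ℝ)}).toReal
            ≤ Real.exp (-t * (1.4 * ((k : ℝ) / p))) * mgf (∑ i, X i) μ t := hcher
          _ ≤ Real.exp (-t * (1.4 * ((k : ℝ) / p))) * (7 / 5 : ℝ) ^ k := by
              exact mul_le_mul_of_nonneg_left hprod (Real.exp_pos _).le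
          _ = _ := hfinal
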